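/- (Simulation of strategies.) Let Φ = Φ_NS be a density operator on H_N ⊗ H_S and Ψ = Ψ_NT a density operator on H_N ⊗ H_T, and suppose Φ is better than Ψ. Then for every finite-dimensional H_A, H_B, every density operator ρ_AB on H_A ⊗ H_B, every k, and every POVM (E^1, …, E^k) on H_T ⊗ H_A, there exists a POVM (D^1, …, D^k) on H_S ⊗ H_A such that for each i, tr_{SA}[ (Φ ⊗ ρ_AB) · (I_{NB} ⊗ D^i) ] = tr_{TA}[ (Ψ ⊗ ρ_AB) · (I_{NB} ⊗ E^i) ] as operators on H_N ⊗ H_B, where tr_{SA} (resp. tr_{TA}) denotes the partial trace over H_S ⊗ H_A (resp. H_T ⊗ H_A), the tensor factors being reordered appropriately. -/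

import Mathlib

open Matrix Kronecker BigOperators
open scoped ComplexOrder

/-- A density operator: positive semidefinite with trace 1. -/
def IsDensity {ι : Type} [Fintype ι] (A : Matrix ι ι ℂ) : Prop :=
  A.PosSemidef ∧ A.trace = 1

/-- A POVM with `k` outcomes: positive semidefinite operators summing to the identity. -/
def IsPOVM {ι : Type} [Fintype ι] [DecidableEq ι] {k : ℕ}
    (D : Fin k → Matrix ι ι ℂ) : Prop :=
  (∀ i, (D i).PosSemidef) ∧ ∑ i, D i = 1

/-- Reindexing that aligns the tensor factors N⊗S⊗A⊗B with (N⊗B)⊗(S⊗A). -/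
def reord {n s a b : ℕ} :
    (Fin n × Fin s) × (Fin a × Fin b) → (Fin n × Fin b) × (Fin s × Fin a) :=
  fun p => ((p.1.1, p.2.2), (p.1.2, p.2.1))

/-- The expected payoff `tr((Φ ⊗ ρ)·(M ⊗ D))`, with tensor factors reordered so that
`M` acts on `H_N ⊗ H_B` and `D` acts on `H_S ⊗ H_A`. -/
noncomputable def payoff {n s a b : ℕ}
    (Φ : Matrix (Fin n × Fin s) (Fin n × Fin s) ℂ)
    (ρ : Matrix (Fin a × Fin b) (Fin a × Fin b) ℂ)
    (M : Matrix (Fin n × Fin b) (Fin n × Fin b) ℂ)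
    (D : Matrix (Fin s × Fin a) (Fin s × Fin a) ℂ) : ℝ :=
  (((Φ ⊗ₖ ρ) * ((M ⊗ₖ D).submatrix reord reord)).trace).re

/-- The value of the game `(ρ, M^1, …, M^k)` over the information structure `Φ`:
the maximal expected payoff over all strategies (POVMs on `H_S ⊗ H_A`). -/
noncomputable def Rval {n s a b k : ℕ}
    (Φ : Matrix (Fin n × Fin s) (Fin n × Fin s) ℂ)
    (ρ : Matrix (Fin a × Fin b) (Fin a × Fin b) ℂ)
    (M : Fin k → Matrix (Fin n × Fin b) (Fin n × Fin b) ℂ) : ℝ :=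
  sSup {r : ℝ | ∃ D : Fin k → Matrix (Fin s × Fin a) (Fin s × Fin a) ℂ,
    IsPOVM D ∧ r = ∑ i, payoff Φ ρ (M i) (D i)}

/-- `Φ` is better than `Ψ`: in every game (environment `ρ_AB` together with Hermitian
payoff observables `M^1, …, M^k` on `H_N ⊗ H_B`) the value over `Φ` is at least the
value over `Ψ`. -/
def Better {n s t : ℕ}
    (Φ : Matrix (Fin n × Fin s) (Fin n × Fin s) ℂ)
    (Ψ : Matrix (Fin n × Fin t) (Fin n × Fin t) ℂ) : Prop :=
  ∀ (a b k : ℕ) (ρ : Matrix (Fin a × Fin b) (Fin a × Fin b) ℂ)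
    (M : Fin k → Matrix (Fin n × Fin b) (Fin n × Fin b) ℂ),
    IsDensity ρ → (∀ i, (M i).IsHermitian) →
      Rval Ψ ρ M ≤ Rval Φ ρ M


/-- `tr_{SA}[ (Φ ⊗ ρ_AB) · (I_{NB} ⊗ D) ]`: the (unnormalized) state of `N ⊗ B`
after the measurement outcome corresponding to `D`, tensor factors reordered so
that `D` acts on `H_S ⊗ H_A`. -/
noncomputable def postState {n s a b : ℕ}
    (Φ : Matrix (Fin n × Fin s) (Fin n × Fin s) ℂ)
    (ρ : Matrix (Fin a × Fin b) (Fin a × Fin b) ℂ)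
    (D : Matrix (Fin s × Fin a) (Fin s × Fin a) ℂ) :
    Matrix (Fin n × Fin b) (Fin n × Fin b) ℂ :=
  Matrix.of fun p q => ∑ σ : Fin s, ∑ α : Fin a,
    ((Φ ⊗ₖ ρ) *
      (((1 : Matrix (Fin n × Fin b) (Fin n × Fin b) ℂ) ⊗ₖ D).submatrix reord reord))
      ((p.1, σ), (α, p.2)) ((q.1, σ), (α, q.2))

/-!
Suppose some POVM `E` for `Ψ` cannot be simulated. The tuples of post-measurement states that
`Φ` can produce form the image of the POVMs under a linear map, hence a compact convex set, and
the tuple produced by `E` lies outside it. Hahn–Banach separates the two by a real functional,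
and every real functional on tuples of Hermitian matrices has the form `X ↦ ∑ᵢ Re tr(Mᵢ Xᵢ)` with
`Mᵢ` Hermitian. Since the payoff of a strategy `D` in the game `(ρ, M)` is exactly
`∑ᵢ Re tr(Mᵢ · postState(Dᵢ))`, this game is worth strictly more over `Ψ` than over `Φ`,
contradicting that `Φ` is better than `Ψ`.
-/

theorem IsDensity.nonempty {ι : Type} [Fintype ι] {A : Matrix ι ι ℂ} (hA : IsDensity A) :
    Nonempty ι := by
  by_contra h
  rw [not_nonempty_iff] at h
  simpa [Matrix.trace] using hA.2

section POVM

variable {ι : Type} [Fintype ι] [DecidableEq ι] {k : ℕ}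

theorem exists_isPOVM_iff : (∃ D : Fin k → Matrix ι ι ℂ, IsPOVM D) ↔ 0 < k ∨ IsEmpty ι := by
  constructor
  · rintro ⟨D, hD⟩
    refine k.eq_zero_or_pos.symm.imp_right fun hk => ?_
    subst hk
    refine not_nonempty_iff.mp fun ⟨i⟩ => ?_
    simpa using congrFun (congrFun hD.2 i) i
  · rintro (hk | hι)
    · refine ⟨Pi.single ⟨0, hk⟩ 1, fun i => ?_,
        Finset.sum_pi_single' _ _ _ |>.trans (if_pos (Finset.mem_univ _))⟩
      rcases eq_or_ne i ⟨0, hk⟩ with rfl | hi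
      · simpa using Matrix.PosSemidef.one
      · simpa [hi] using Matrix.PosSemidef.zero
    · exact ⟨0, fun _ => Matrix.PosSemidef.zero, Subsingleton.elim _ _⟩

theorem exists_isPOVM_prod_of_isPOVM {α β γ : Type} [Fintype α] [DecidableEq α] [Nonempty α]
    [Fintype β] [DecidableEq β] [Fintype γ] [DecidableEq γ]
    {E : Fin k → Matrix (α × γ) (α × γ) ℂ} (hE : IsPOVM E) :
    ∃ D : Fin k → Matrix (β × γ) (β × γ) ℂ, IsPOVM D := by
  refine exists_isPOVM_iff.2 ((exists_isPOVM_iff.1 ⟨E, hE⟩).imp_right fun h => ?_)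
  rw [isEmpty_prod] at h ⊢
  exact Or.inr (h.resolve_left (not_isEmpty_of_nonempty α))

/- In the C⋆-algebra structure given by the operator norm, the nonnegative cone is closed and the
norm is monotone on it, which makes the set of POVMs visibly closed and bounded. -/
open scoped MatrixOrder Matrix.Norms.L2Operator

theorem isPOVM_iff_nonneg {D : Fin k → Matrix ι ι ℂ} :
    IsPOVM D ↔ (∀ i, 0 ≤ D i) ∧ ∑ i, D i = 1 := by
  simp only [IsPOVM, Matrix.nonneg_iff_posSemidef]

theorem IsPOVM.norm_le_norm_one {D : Fin k → Matrix ι ι ℂ} (hD : IsPOVM D) (i : Fin k) :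
    ‖D i‖ ≤ ‖(1 : Matrix ι ι ℂ)‖ := by
  rw [isPOVM_iff_nonneg] at hD
  exact CStarAlgebra.norm_le_norm_of_nonneg_of_le (hD.1 i)
    (hD.2 ▸ Finset.single_le_sum (fun j _ => hD.1 j) (Finset.mem_univ i))

theorem isCompact_setOf_isPOVM : IsCompact {D : Fin k → Matrix ι ι ℂ | IsPOVM D} := by
  refine Metric.isCompact_of_isClosed_isBounded ?_ ?_
  · simp only [isPOVM_iff_nonneg, Set.ofPred_and, Set.ofPred_forall]
    exact (isClosed_iInter fun i =>
        CStarAlgebra.isClosed_nonneg.preimage (continuous_apply i)).inter <|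
      isClosed_eq (continuous_finsetSum _ fun i _ =>
        continuous_apply (A := fun _ : Fin k => Matrix ι ι ℂ) i) continuous_const
  · refine (Metric.isBounded_closedBall (x := 0) (r := ‖(1 : Matrix ι ι ℂ)‖)).subset fun D hD => ?_
    rw [Metric.mem_closedBall, dist_zero_right]
    exact pi_norm_le_iff_of_nonneg (norm_nonneg _) |>.mpr hD.norm_le_norm_one

theorem convex_setOf_isPOVM : Convex ℝ {D : Fin k → Matrix ι ι ℂ | IsPOVM D} := by
  intro D hD E hE θ τ hθ hτ hθτ
  simp only [Set.mem_ofPred_eq, isPOVM_iff_nonneg] at hD hE ⊢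
  refine ⟨fun i => add_nonneg (smul_nonneg hθ (hD.1 i)) (smul_nonneg hτ (hE.1 i)), ?_⟩
  simp only [Pi.add_apply, Pi.smul_apply, Finset.sum_add_distrib, ← Finset.smul_sum, hD.2, hE.2,
    ← add_smul, hθτ, one_smul]

end POVM

section TraceDuality

variable {ι : Type} [Fintype ι] [DecidableEq ι]

theorem Matrix.exists_forall_apply_eq_trace_mul (F : Matrix ι ι ℂ →ₗ[ℂ] ℂ) :
    ∃ A : Matrix ι ι ℂ, ∀ X, F X = (A * X).trace := by
  refine ⟨Matrix.of fun p q => F (Matrix.single q p 1), fun X => ?_⟩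
  conv_lhs => rw [Matrix.matrix_eq_sum_single X]
  simp only [map_sum, Matrix.trace, Matrix.diag_apply, Matrix.mul_apply, Matrix.of_apply]
  rw [Finset.sum_comm]
  refine Fintype.sum_congr _ _ fun p => Fintype.sum_congr _ _ fun q => ?_
  rw [mul_comm, ← smul_eq_mul, ← map_smul, Matrix.smul_single, smul_eq_mul, mul_one]

theorem Matrix.exists_isHermitian_forall_re_trace_mul_eq (f : Matrix ι ι ℂ →ₗ[ℝ] ℝ) :
    ∃ A : Matrix ι ι ℂ, A.IsHermitian ∧
      ∀ X : Matrix ι ι ℂ, X.IsHermitian → (A * X).trace.re = f X := by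
  obtain ⟨A, hA⟩ := Matrix.exists_forall_apply_eq_trace_mul (Module.Dual.extendRCLike (𝕜 := ℂ) f)
  refine ⟨realPart A, (realPart A).2.isHermitian, fun X hX => ?_⟩
  have : (Aᴴ * X).trace.re = (A * X).trace.re := by
    rw [← hX.eq, ← Matrix.conjTranspose_mul, Matrix.trace_conjTranspose, Matrix.trace_mul_comm,
      hX.eq]
    exact Complex.conj_re _
  rw [realPart_apply_coe, smul_mul_assoc, Matrix.trace_smul, add_mul, Matrix.trace_add]
  simp only [Complex.real_smul, Complex.re_ofReal_mul, Complex.add_re]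
  have hre : (Module.Dual.extendRCLike (𝕜 := ℂ) f X).re = f X :=
    RCLike.re_to_complex.symm.trans (Module.Dual.re_extendRCLike_apply f X)
  rw [Matrix.star_eq_conjTranspose, this, ← hA, hre]
  ring

variable {κ : Type} [Fintype κ] [DecidableEq κ]

-- Any norm would do here: it only supplies the local convexity needed by Hahn–Banach.
open scoped Matrix.Norms.L2Operator in
theorem exists_isHermitian_separating {S : Set (κ → Matrix ι ι ℂ)} (hS : Convex ℝ S)
    (hS' : IsClosed S) (hSh : ∀ y ∈ S, ∀ i, (y i).IsHermitian) {x : κ → Matrix ι ι ℂ}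
    (hx : ∀ i, (x i).IsHermitian) (hxS : x ∉ S) :
    ∃ M : κ → Matrix ι ι ℂ, (∀ i, (M i).IsHermitian) ∧ ∃ u : ℝ,
      (∀ y ∈ S, ∑ i, (M i * y i).trace.re < u) ∧ u < ∑ i, (M i * x i).trace.re := by
  obtain ⟨f, u, hfS, hfx⟩ := geometric_hahn_banach_closed_point hS hS' hxS
  choose M hM hMf using fun i =>
    Matrix.exists_isHermitian_forall_re_trace_mul_eq
      (f.toLinearMap ∘ₗ LinearMap.single ℝ (fun _ => Matrix ι ι ℂ) i)
  have hf : ∀ y : κ → Matrix ι ι ℂ, (∀ i, (y i).IsHermitian) →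
      f y = ∑ i, (M i * y i).trace.re := by
    intro y hy
    conv_lhs => rw [← Finset.univ_sum_single y]
    simp only [map_sum, hMf _ _ (hy _)]
    rfl
  exact ⟨M, hM, u, fun y hy => hf y (hSh y hy) ▸ hfS y hy, hf x hx ▸ hfx⟩

end TraceDuality

section PostState

variable {n s a b : ℕ} (Φ : Matrix (Fin n × Fin s) (Fin n × Fin s) ℂ)
  (ρ : Matrix (Fin a × Fin b) (Fin a × Fin b) ℂ)

theorem postState_apply (D : Matrix (Fin s × Fin a) (Fin s × Fin a) ℂ) (p q : Fin n × Fin b) :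
    postState Φ ρ D p q = ∑ x : Fin s × Fin a, ∑ y : Fin s × Fin a,
      (Φ ⊗ₖ ρ) ((p.1, x.1), (x.2, p.2)) ((q.1, y.1), (y.2, q.2)) * D y x := by
  simp only [postState, Matrix.of_apply, Matrix.mul_apply, Matrix.submatrix_apply, reord,
    kroneckerMap_apply, Matrix.one_apply, Fintype.sum_prod_type, Prod.mk.injEq,
    ite_and, mul_ite, mul_zero, ite_mul, zero_mul, one_mul,
    Finset.sum_ite_irrel, Finset.sum_const_zero, Finset.sum_ite_eq',
    Finset.mem_univ, if_true]

noncomputable def postStateₗ :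
    Matrix (Fin s × Fin a) (Fin s × Fin a) ℂ →ₗ[ℂ] Matrix (Fin n × Fin b) (Fin n × Fin b) ℂ where
  toFun := postState Φ ρ
  map_add' D E := by
    ext p q
    simp only [postState_apply, Matrix.add_apply, mul_add, Finset.sum_add_distrib]
  map_smul' c D := by
    ext p q
    simp only [postState_apply, Matrix.smul_apply, smul_eq_mul, RingHom.id_apply, Finset.mul_sum,
      mul_left_comm c]

variable {Φ ρ} in
theorem isHermitian_postState (hΦ : Φ.IsHermitian) (hρ : ρ.IsHermitian)
    {D : Matrix (Fin s × Fin a) (Fin s × Fin a) ℂ} (hD : D.IsHermitian) :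
    (postState Φ ρ D).IsHermitian := by
  have hG : (Φ ⊗ₖ ρ).IsHermitian := by
    rw [Matrix.IsHermitian, Matrix.conjTranspose_kronecker, hΦ.eq, hρ.eq]
  ext p q
  rw [Matrix.conjTranspose_apply, postState_apply, postState_apply, Finset.sum_comm]
  simp only [star_sum, star_mul', hG.apply, hD.apply]

def reordEquiv : (Fin n × Fin s) × (Fin a × Fin b) ≃ (Fin n × Fin b) × (Fin s × Fin a) where
  toFun := reord
  invFun u := ((u.1.1, u.2.1), (u.2.2, u.1.2))
  left_inv _ := rfl
  right_inv _ := rfl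

theorem payoff_eq_re_trace_mul_postState (M : Matrix (Fin n × Fin b) (Fin n × Fin b) ℂ)
    (D : Matrix (Fin s × Fin a) (Fin s × Fin a) ℂ) :
    payoff Φ ρ M D = (M * postState Φ ρ D).trace.re := by
  let e : (Fin n × Fin s) × (Fin a × Fin b) ≃ (Fin n × Fin b) × (Fin s × Fin a) := reordEquiv
  have hlhs : ((Φ ⊗ₖ ρ) * (M ⊗ₖ D).submatrix reord reord).trace =
      ∑ u : (Fin n × Fin b) × (Fin s × Fin a), ∑ v : (Fin n × Fin b) × (Fin s × Fin a),
        M v.1 u.1 *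
          ((Φ ⊗ₖ ρ) ((u.1.1, u.2.1), (u.2.2, u.1.2)) ((v.1.1, v.2.1), (v.2.2, v.1.2)) *
            D v.2 u.2) := by
    simp only [Matrix.trace, Matrix.diag_apply, Matrix.mul_apply, Matrix.submatrix_apply,
      kroneckerMap_apply]
    rw [← e.symm.sum_comp]
    refine Fintype.sum_congr _ _ fun u => ?_
    rw [← e.symm.sum_comp]
    exact Fintype.sum_congr _ _ fun v => mul_left_comm _ _ _
  rw [payoff, hlhs, Matrix.trace]
  congr 1
  simp only [Matrix.diag_apply, Matrix.mul_apply, postState_apply, Finset.mul_sum]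
  simp only [← Fintype.sum_prod_type']
  refine Fintype.sum_equiv
    { toFun uv := (uv.2.1, uv.1.1, uv.1.2, uv.2.2)
      invFun w := ((w.2.1, w.2.2.1), (w.1, w.2.2.2))
      left_inv _ := rfl
      right_inv _ := rfl } _ _ fun _ => rfl

end PostState

section Value

variable {n s a b k : ℕ} (Φ : Matrix (Fin n × Fin s) (Fin n × Fin s) ℂ)
  (ρ : Matrix (Fin a × Fin b) (Fin a × Fin b) ℂ)

theorem isCompact_image_postState :
    IsCompact ((postStateₗ Φ ρ).compLeft (Fin k) '' {D | IsPOVM D}) :=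
  isCompact_setOf_isPOVM.image (LinearMap.continuous_of_finiteDimensional _)

theorem convex_image_postState :
    Convex ℝ ((postStateₗ Φ ρ).compLeft (Fin k) '' {D | IsPOVM D}) :=
  convex_setOf_isPOVM.linear_image (((postStateₗ Φ ρ).compLeft (Fin k)).restrictScalars ℝ)

variable {Φ ρ} in
theorem isHermitian_of_mem_image_postState (hΦ : Φ.IsHermitian) (hρ : ρ.IsHermitian)
    {y : Fin k → Matrix (Fin n × Fin b) (Fin n × Fin b) ℂ}
    (hy : y ∈ (postStateₗ Φ ρ).compLeft (Fin k) '' {D | IsPOVM D}) (i : Fin k) :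
    (y i).IsHermitian := by
  obtain ⟨D, hD, rfl⟩ := hy
  exact isHermitian_postState hΦ hρ (hD.1 i).1

variable (M : Fin k → Matrix (Fin n × Fin b) (Fin n × Fin b) ℂ)

theorem Rval_le_of_forall_le {u : ℝ}
    (hne : ∃ D : Fin k → Matrix (Fin s × Fin a) (Fin s × Fin a) ℂ, IsPOVM D)
    (h : ∀ D, IsPOVM D → ∑ i, (M i * postState Φ ρ (D i)).trace.re ≤ u) :
    Rval Φ ρ M ≤ u := by
  obtain ⟨D₀, hD₀⟩ := hne
  refine csSup_le ⟨_, D₀, hD₀, rfl⟩ ?_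
  rintro _ ⟨D, hD, rfl⟩
  simpa only [payoff_eq_re_trace_mul_postState] using h D hD

theorem le_Rval {D : Fin k → Matrix (Fin s × Fin a) (Fin s × Fin a) ℂ} (hD : IsPOVM D) :
    ∑ i, (M i * postState Φ ρ (D i)).trace.re ≤ Rval Φ ρ M := by
  have hc : Continuous fun D : Fin k → Matrix (Fin s × Fin a) (Fin s × Fin a) ℂ =>
      ∑ i, (M i * postStateₗ Φ ρ (D i)).trace.re := by
    have hL : Continuous (postStateₗ Φ ρ) := LinearMap.continuous_of_finiteDimensional _
    fun_prop
  refine le_csSup ((isCompact_setOf_isPOVM.image hc).bddAbove.mono ?_) ⟨D, hD, ?_⟩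
  · rintro _ ⟨D, hD, rfl⟩
    exact ⟨D, hD, by simp only [payoff_eq_re_trace_mul_postState]; rfl⟩
  · simp only [payoff_eq_re_trace_mul_postState]

end Value

/-- **Simulation of strategies.** If `Φ` is better than `Ψ`, then every strategy
(POVM) for `Ψ` can be simulated by a strategy for `Φ`, producing the same
(unnormalized) post-measurement states on `H_N ⊗ H_B` for every outcome. -/
theorem simulation_of_strategies (n s t : ℕ)
    (Φ : Matrix (Fin n × Fin s) (Fin n × Fin s) ℂ)
    (Ψ : Matrix (Fin n × Fin t) (Fin n × Fin t) ℂ)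
    (hΦ : IsDensity Φ) (hΨ : IsDensity Ψ)
    (hbetter : Better Φ Ψ) :
    ∀ (a b : ℕ) (ρ : Matrix (Fin a × Fin b) (Fin a × Fin b) ℂ), IsDensity ρ →
      ∀ (k : ℕ) (E : Fin k → Matrix (Fin t × Fin a) (Fin t × Fin a) ℂ), IsPOVM E →
        ∃ D : Fin k → Matrix (Fin s × Fin a) (Fin s × Fin a) ℂ, IsPOVM D ∧
          ∀ i, postState Φ ρ (D i) = postState Ψ ρ (E i) := by
  intro a b ρ hρ k E hE
  by_contra! hsim
  have hEΦ : (fun i => postState Ψ ρ (E i)) ∉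
      (postStateₗ Φ ρ).compLeft (Fin k) '' {D | IsPOVM D} := by
    rintro ⟨D, hD, hDE⟩
    obtain ⟨i, hi⟩ := hsim D hD
    exact hi (congrFun hDE i)
  obtain ⟨M, hM, u, hΦu, huΨ⟩ := exists_isHermitian_separating (convex_image_postState Φ ρ)
    (isCompact_image_postState Φ ρ).isClosed
    (fun _ hy => isHermitian_of_mem_image_postState hΦ.1.1 hρ.1.1 hy)
    (fun i => isHermitian_postState hΨ.1.1 hρ.1.1 (hE.1 i).1) hEΦ
  have : Nonempty (Fin t) := hΨ.nonempty.map Prod.snd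
  have hRΦ : Rval Φ ρ M ≤ u :=
    Rval_le_of_forall_le Φ ρ M (exists_isPOVM_prod_of_isPOVM hE) fun D hD =>
      (hΦu _ ⟨D, hD, rfl⟩).le
  linarith [hbetter a b k ρ M hρ hM, le_Rval Ψ ρ M hE]
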